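/- arXiv:2603.22654 — 3 statements merged into one kernel-verified Lean document; each statement's English description precedes it below -/
import Mathlib

section
/- Let a₀, b₀, a₁, b₁ be real numbers with b₀ ≤ 0, b₁ ≤ 0, (b₀, b₁) ≠ (0,0), and such that b₀ = 0 implies a₀ < 0 and b₁ = 0 implies a₁ < 0. Then the input u = max{φ_S(a₀,b₀), φ_S(a₁,b₁)} satisfies a₀ + b₀·u < 0 and a₁ + b₁·u < 0. -/
/-- Sontag's universal formula. -/
noncomputable def phiS (a b : ℝ) : ℝ :=
  if b ≠ 0 then -(a + Real.sqrt (a ^ 2 + b ^ 4)) / b else 0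

lemma phiS_key (a b : ℝ) (hb : b < 0) (u : ℝ) (hu : phiS a b ≤ u) :
    a + b * u < 0 := by
  have hbne : b ≠ 0 := ne_of_lt hb
  have hphi : phiS a b = -(a + Real.sqrt (a ^ 2 + b ^ 4)) / b := by
    simp [phiS, hbne]
  have hmul : b * u ≤ b * phiS a b := mul_le_mul_of_nonpos_left hu (le_of_lt hb)
  have hbp : b * phiS a b = -(a + Real.sqrt (a ^ 2 + b ^ 4)) := by
    rw [hphi]; field_simp
  have hsq : 0 < Real.sqrt (a ^ 2 + b ^ 4) := by
    apply Real.sqrt_pos.mpr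
    have : 0 < b ^ 4 := by positivity
    nlinarith [sq_nonneg a]
  nlinarith
/-- Case 2: `b₀ ≤ 0`, `b₁ ≤ 0`, `(b₀,b₁) ≠ (0,0)`; the input
`u = max{φ_S(a₀,b₀), φ_S(a₁,b₁)}` satisfies both strict inequalities. -/
theorem stmt_10 (a0 b0 a1 b1 : ℝ) (hb0 : b0 ≤ 0) (hb1 : b1 ≤ 0)
    (hne : (b0, b1) ≠ (0, 0))
    (h0 : b0 = 0 → a0 < 0) (h1 : b1 = 0 → a1 < 0) :
    a0 + b0 * max (phiS a0 b0) (phiS a1 b1) < 0 ∧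
    a1 + b1 * max (phiS a0 b0) (phiS a1 b1) < 0 := by
  constructor
  · rcases lt_or_eq_of_le hb0 with h | h
    · exact phiS_key a0 b0 h _ (le_max_left _ _)
    · simpa [h] using h0 h
  · rcases lt_or_eq_of_le hb1 with h | h
    · exact phiS_key a1 b1 h _ (le_max_right _ _)
    · simpa [h] using h1 h
end

section
/- The map K_m is continuous on the set D_c = {(a₀,b₀,a₁,b₁) ∈ ℝ⁴ : (b₀ = 0 implies a₀ < 0), (b₁ = 0 implies a₁ < 0), and (b₀b₁ < 0 implies -a_j/b_j < -a_i/b_i, where i ∈ {0,1} is the index with b_i > 0 and j the index with b_j < 0)}; that is, K_m restricted to D_c is continuous at every point of D_c. -/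
/-- The min-max safe-stabilizing feedback law `K_m` (built from Sontag's formula),
as a function of the CLF data `(a₀,b₀)` and CBF data `(a₁,b₁)`.
In the region `b₀·b₁ < 0`, `i` denotes the index with `b_i > 0` and `j` the index
with `b_j < 0`, and `Δ = -a₀/b₀ - a₁/b₁`. -/
noncomputable def Km (a0 b0 a1 b1 : ℝ) : ℝ :=
  if b0 * b1 < 0 then
    if 0 < b0 then
      -- i = 0, j = 1
      min (phiS a1 b1) (max (phiS a0 b0) ((-a0 / b0 - a1 / b1) / 2))
    else
      -- i = 1, j = 0
      min (phiS a0 b0) (max (phiS a1 b1) ((-a0 / b0 - a1 / b1) / 2))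
  else if 0 ≤ b0 ∧ 0 ≤ b1 then min (phiS a0 b0) (phiS a1 b1)
  else max (phiS a0 b0) (phiS a1 b1)

/-- The compatible-data set `D_c`: points `(a₀,b₀,a₁,b₁)` satisfying the pointwise
CLF and CBF conditions and the compatibility condition. -/
def Dc : Set (ℝ × ℝ × ℝ × ℝ) :=
  {p | (p.2.1 = 0 → p.1 < 0) ∧ (p.2.2.2 = 0 → p.2.2.1 < 0) ∧
       (p.2.1 * p.2.2.2 < 0 →
         (0 < p.2.1 → -p.2.2.1 / p.2.2.2 < -p.1 / p.2.1) ∧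
         (0 < p.2.2.2 → -p.1 / p.2.1 < -p.2.2.1 / p.2.2.2))}

open Filter Topology

lemma sqrt_gt_neg (a b : ℝ) (hb : b ≠ 0) : -a < Real.sqrt (a ^ 2 + b ^ 4) := by
  have h4 : 0 < b ^ 4 := by positivity
  have h : |a| < Real.sqrt (a ^ 2 + b ^ 4) := by
    rw [← Real.sqrt_sq_eq_abs]
    exact Real.sqrt_lt_sqrt (by positivity) (by linarith)
  linarith [neg_abs_le a]

lemma phiS_neg_of_pos {a b : ℝ} (hb : 0 < b) : phiS a b < 0 := by
  have h := sqrt_gt_neg a b hb.ne'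
  rw [phiS, if_pos hb.ne']
  apply div_neg_of_neg_of_pos _ hb
  linarith

lemma phiS_pos_of_neg {a b : ℝ} (hb : b < 0) : 0 < phiS a b := by
  have h := sqrt_gt_neg a b hb.ne
  rw [phiS, if_pos hb.ne]
  exact div_pos_of_neg_of_neg (by linarith) hb

lemma phiS_zero (a : ℝ) : phiS a 0 = 0 := by simp [phiS]

lemma phiS_contAt {x : ℝ × ℝ} (h : x.2 ≠ 0 ∨ x.1 < 0) :
    ContinuousAt (fun q : ℝ × ℝ => phiS q.1 q.2) x := by
  obtain ⟨a, b⟩ := x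
  simp only at h
  rcases ne_or_eq b 0 with hb | hb
  · have hcont : ContinuousAt (fun q : ℝ × ℝ =>
        -(q.1 + Real.sqrt (q.1 ^ 2 + q.2 ^ 4)) / q.2) (a, b) :=
      ContinuousAt.div (by fun_prop) (by fun_prop) hb
    apply hcont.congr
    filter_upwards [IsOpen.eventually_mem (isOpen_ne_fun continuous_snd continuous_const)
      (show (a, b).2 ≠ 0 from hb)] with q hq
    rw [phiS, if_pos hq]
  · subst hb
    have ha : a < 0 := h.resolve_left (by simp)
    have hden : Real.sqrt ((a:ℝ) ^ 2 + 0 ^ 4) - a ≠ 0 := by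
      have : Real.sqrt (a ^ 2 + 0 ^ 4) = |a| := by
        rw [show a ^ 2 + (0:ℝ) ^ 4 = a ^ 2 by ring, Real.sqrt_sq_eq_abs]
      rw [this, abs_of_neg ha]
      linarith
    have hcont : ContinuousAt (fun q : ℝ × ℝ =>
        -q.2 ^ 3 / (Real.sqrt (q.1 ^ 2 + q.2 ^ 4) - q.1)) (a, 0) :=
      ContinuousAt.div (by fun_prop) (by fun_prop) hden
    apply hcont.congr
    filter_upwards [IsOpen.eventually_mem (isOpen_lt continuous_fst continuous_const)
      (show (a, (0:ℝ)).1 < 0 from ha)] with q hq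
    have hs : 0 ≤ Real.sqrt (q.1 ^ 2 + q.2 ^ 4) := Real.sqrt_nonneg _
    have hden' : Real.sqrt (q.1 ^ 2 + q.2 ^ 4) - q.1 ≠ 0 := by
      have : (0:ℝ) < Real.sqrt (q.1 ^ 2 + q.2 ^ 4) - q.1 := by linarith
      linarith
    by_cases hb' : q.2 = 0
    · rw [phiS, if_neg (not_not_intro hb'), hb']
      simp
    · rw [phiS, if_pos hb', div_eq_div_iff hden' hb']
      have hs2 : Real.sqrt (q.1 ^ 2 + q.2 ^ 4) ^ 2 = q.1 ^ 2 + q.2 ^ 4 :=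
        Real.sq_sqrt (by positivity)
      linear_combination hs2

/-- The uncurried version of `Km` on pairs. -/
noncomputable def K' (q : (ℝ × ℝ) × (ℝ × ℝ)) : ℝ := Km q.1.1 q.1.2 q.2.1 q.2.2

lemma Km_symm (a0 b0 a1 b1 : ℝ) : Km a0 b0 a1 b1 = Km a1 b1 a0 b0 := by
  unfold Km
  have hΔ : -a0 / b0 - a1 / b1 = -a1 / b1 - a0 / b0 := by ring
  by_cases h : b0 * b1 < 0
  · have h' : b1 * b0 < 0 := by rw [mul_comm]; exact h
    rw [if_pos h, if_pos h']
    rcases lt_trichotomy b0 0 with hb0 | hb0 | hb0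
    · have hb1 : 0 < b1 := by by_contra hc; push_neg at hc; nlinarith
      rw [if_neg (not_lt.mpr hb0.le), if_pos hb1, hΔ]
    · exfalso; rw [hb0] at h; simp at h
    · have hb1 : b1 < 0 := by nlinarith
      rw [if_pos hb0, if_neg (by linarith : ¬ 0 < b1), hΔ]
  · have h' : ¬ b1 * b0 < 0 := by rwa [mul_comm]
    rw [if_neg h, if_neg h']
    by_cases hc : 0 ≤ b0 ∧ 0 ≤ b1
    · rw [if_pos hc, if_pos ⟨hc.2, hc.1⟩, min_comm]
    · rw [if_neg hc, if_neg (by tauto), max_comm]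


lemma min_le_Km (a0 b0 a1 b1 : ℝ) :
    min (phiS a0 b0) (phiS a1 b1) ≤ Km a0 b0 a1 b1 := by
  unfold Km
  split_ifs with h1 h2 h3
  · exact le_min (min_le_right _ _) (le_trans (min_le_left _ _) (le_max_left _ _))
  · exact le_min (min_le_left _ _) (le_trans (min_le_right _ _) (le_max_left _ _))
  · exact le_refl _
  · exact le_trans (min_le_left _ _) (le_max_left _ _)

lemma Km_le_max (a0 b0 a1 b1 : ℝ) :
    Km a0 b0 a1 b1 ≤ max (phiS a0 b0) (phiS a1 b1) := by
  unfold Km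
  split_ifs with h1 h2 h3
  · exact le_trans (min_le_left _ _) (le_max_right _ _)
  · exact le_trans (min_le_left _ _) (le_max_left _ _)
  · exact le_trans (min_le_left _ _) (le_max_left _ _)
  · exact le_refl _

lemma contAt_phi_fst {x y : ℝ × ℝ} (h : x.2 ≠ 0 ∨ x.1 < 0) :
    ContinuousAt (fun q : (ℝ × ℝ) × (ℝ × ℝ) => phiS q.1.1 q.1.2) (x, y) := by
  have h1 : ContinuousAt (Prod.fst : (ℝ × ℝ) × (ℝ × ℝ) → ℝ × ℝ) (x, y) := continuousAt_fst
  exact (phiS_contAt h).comp h1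

lemma contAt_phi_snd {x y : ℝ × ℝ} (h : y.2 ≠ 0 ∨ y.1 < 0) :
    ContinuousAt (fun q : (ℝ × ℝ) × (ℝ × ℝ) => phiS q.2.1 q.2.2) (x, y) := by
  have h1 : ContinuousAt (Prod.snd : (ℝ × ℝ) × (ℝ × ℝ) → ℝ × ℝ) (x, y) := continuousAt_snd
  exact (phiS_contAt h).comp h1

lemma contAt_pp {a0 b0 a1 b1 : ℝ} (h0 : 0 < b0) (h1 : 0 < b1) :
    ContinuousAt K' ((a0, b0), (a1, b1)) := by
  have hc : ContinuousAt
      (fun q : (ℝ × ℝ) × (ℝ × ℝ) => min (phiS q.1.1 q.1.2) (phiS q.2.1 q.2.2))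
      ((a0, b0), (a1, b1)) :=
    (contAt_phi_fst (Or.inl h0.ne')).min (contAt_phi_snd (Or.inl h1.ne'))
  apply hc.congr
  filter_upwards [IsOpen.eventually_mem
    ((isOpen_lt continuous_const (continuous_fst.snd)).inter
      (isOpen_lt continuous_const (continuous_snd.snd)))
    (show ((0:ℝ) < b0 ∧ (0:ℝ) < b1) from ⟨h0, h1⟩)] with q hq
  obtain ⟨hq0, hq1⟩ := hq
  simp only [Set.mem_setOf_eq] at hq0 hq1
  unfold K' Km
  rw [if_neg (by nlinarith), if_pos ⟨hq0.le, hq1.le⟩]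

lemma contAt_nn {a0 b0 a1 b1 : ℝ} (h0 : b0 < 0) (h1 : b1 < 0) :
    ContinuousAt K' ((a0, b0), (a1, b1)) := by
  have hc : ContinuousAt
      (fun q : (ℝ × ℝ) × (ℝ × ℝ) => max (phiS q.1.1 q.1.2) (phiS q.2.1 q.2.2))
      ((a0, b0), (a1, b1)) :=
    (contAt_phi_fst (Or.inl h0.ne)).max (contAt_phi_snd (Or.inl h1.ne))
  apply hc.congr
  filter_upwards [IsOpen.eventually_mem
    ((isOpen_lt (continuous_fst.snd) continuous_const).inter
      (isOpen_lt (continuous_snd.snd) continuous_const))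
    (show (b0 < (0:ℝ) ∧ b1 < (0:ℝ)) from ⟨h0, h1⟩)] with q hq
  obtain ⟨hq0, hq1⟩ := hq
  simp only [Set.mem_setOf_eq] at hq0 hq1
  unfold K' Km
  rw [if_neg (by nlinarith), if_neg (by rintro ⟨hh, -⟩; linarith)]

lemma contAt_pn {a0 b0 a1 b1 : ℝ} (h0 : 0 < b0) (h1 : b1 < 0) :
    ContinuousAt K' ((a0, b0), (a1, b1)) := by
  have hΔ : ContinuousAt
      (fun q : (ℝ × ℝ) × (ℝ × ℝ) => (-q.1.1 / q.1.2 - q.2.1 / q.2.2) / 2)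
      ((a0, b0), (a1, b1)) := by
    apply ContinuousAt.div_const
    apply ContinuousAt.sub
    · exact ContinuousAt.div (by fun_prop) (by fun_prop) h0.ne'
    · exact ContinuousAt.div (by fun_prop) (by fun_prop) h1.ne
  have hc : ContinuousAt
      (fun q : (ℝ × ℝ) × (ℝ × ℝ) => min (phiS q.2.1 q.2.2)
        (max (phiS q.1.1 q.1.2) ((-q.1.1 / q.1.2 - q.2.1 / q.2.2) / 2)))
      ((a0, b0), (a1, b1)) :=
    (contAt_phi_snd (Or.inl h1.ne)).min
      ((contAt_phi_fst (Or.inl h0.ne')).max hΔ)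
  apply hc.congr
  filter_upwards [IsOpen.eventually_mem
    ((isOpen_lt continuous_const (continuous_fst.snd)).inter
      (isOpen_lt (continuous_snd.snd) continuous_const))
    (show ((0:ℝ) < b0 ∧ b1 < (0:ℝ)) from ⟨h0, h1⟩)] with q hq
  obtain ⟨hq0, hq1⟩ := hq
  simp only [Set.mem_setOf_eq] at hq0 hq1
  unfold K' Km
  rw [if_pos (mul_neg_of_pos_of_neg hq0 hq1), if_pos hq0]


lemma contAt_zp {a0 a1 b1 : ℝ} (ha0 : a0 < 0) (hb1 : 0 < b1) :
    ContinuousAt K' ((a0, 0), (a1, b1)) := by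
  obtain ⟨M, hM, hML⟩ : ∃ M : ℝ, 0 < M ∧ -M < 2 * phiS a1 b1 + a1 / b1 :=
    ⟨|2 * phiS a1 b1 + a1 / b1| + 1, by positivity,
      by nlinarith [neg_abs_le (2 * phiS a1 b1 + a1 / b1)]⟩
  set c : ℝ := -a0 / 2 with hcdef
  have hc : 0 < c := by rw [hcdef]; linarith
  have hhc : ContinuousAt
      (fun q : (ℝ × ℝ) × (ℝ × ℝ) => 2 * phiS q.2.1 q.2.2 + q.2.1 / q.2.2)
      ((a0, 0), (a1, b1)) := by
    apply ContinuousAt.add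
    · exact continuousAt_const.mul (contAt_phi_snd (Or.inl hb1.ne'))
    · exact ContinuousAt.div (by fun_prop) (by fun_prop) hb1.ne'
  have hev1 : ∀ᶠ q in 𝓝 (((a0, 0), (a1, b1)) : (ℝ × ℝ) × (ℝ × ℝ)),
      -M < 2 * phiS q.2.1 q.2.2 + q.2.1 / q.2.2 := by
    exact ContinuousAt.eventually_lt continuousAt_const hhc hML
  have hev2 : ∀ᶠ q in 𝓝 (((a0, 0), (a1, b1)) : (ℝ × ℝ) × (ℝ × ℝ)),
      q ∈ ({q : (ℝ × ℝ) × (ℝ × ℝ) | q.1.1 < -c} ∩ {q | -(c / M) < q.1.2} ∩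
        {q | 0 < q.2.2}) := by
    apply IsOpen.eventually_mem
    · exact ((isOpen_lt (continuous_fst.fst) continuous_const).inter
        (isOpen_lt continuous_const (continuous_fst.snd))).inter
        (isOpen_lt continuous_const (continuous_snd.snd))
    · have hdiv : 0 < c / M := div_pos hc hM
      refine ⟨⟨?_, ?_⟩, ?_⟩ <;> simp only [Set.mem_setOf_eq]
      · rw [hcdef]; linarith
      · linarith
      · exact hb1
  have hc2 : ContinuousAt
      (fun q : (ℝ × ℝ) × (ℝ × ℝ) => min (phiS q.1.1 q.1.2) (phiS q.2.1 q.2.2))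
      ((a0, 0), (a1, b1)) :=
    (contAt_phi_fst (Or.inr ha0)).min (contAt_phi_snd (Or.inl hb1.ne'))
  apply hc2.congr
  filter_upwards [hev1, hev2] with q h1 h2
  obtain ⟨⟨h2a, h2b⟩, h2c⟩ := h2
  simp only [Set.mem_setOf_eq] at h2a h2b h2c
  unfold K' Km
  rcases le_or_gt 0 q.1.2 with hB0 | hB0
  · rw [if_neg (by nlinarith), if_pos ⟨hB0, h2c.le⟩]
  · rw [if_pos (mul_neg_of_neg_of_pos hB0 h2c), if_neg (not_lt.mpr hB0.le)]
    have hkey : (-q.1.1 / q.1.2 - q.2.1 / q.2.2) / 2 ≤ phiS q.2.1 q.2.2 := by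
      have hstep : -q.1.1 / q.1.2 < -M := by
        rw [div_lt_iff_of_neg hB0]
        have h5 : -M * q.1.2 < c := by
          nlinarith [mul_div_cancel₀ c hM.ne']
        have h6 : c < -q.1.1 := by linarith
        linarith
      linarith
    rw [max_eq_left hkey]

lemma contAt_zn {a0 a1 b1 : ℝ} (ha0 : a0 < 0) (hb1 : b1 < 0) :
    ContinuousAt K' ((a0, 0), (a1, b1)) := by
  obtain ⟨M, hM, hML⟩ : ∃ M : ℝ, 0 < M ∧ 2 * phiS a1 b1 + a1 / b1 < M :=
    ⟨|2 * phiS a1 b1 + a1 / b1| + 1, by positivity,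
      by nlinarith [le_abs_self (2 * phiS a1 b1 + a1 / b1)]⟩
  set c : ℝ := -a0 / 2 with hcdef
  have hc : 0 < c := by rw [hcdef]; linarith
  have hhc : ContinuousAt
      (fun q : (ℝ × ℝ) × (ℝ × ℝ) => 2 * phiS q.2.1 q.2.2 + q.2.1 / q.2.2)
      ((a0, 0), (a1, b1)) := by
    apply ContinuousAt.add
    · exact continuousAt_const.mul (contAt_phi_snd (Or.inl hb1.ne))
    · exact ContinuousAt.div (by fun_prop) (by fun_prop) hb1.ne
  have hev1 : ∀ᶠ q in 𝓝 (((a0, 0), (a1, b1)) : (ℝ × ℝ) × (ℝ × ℝ)),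
      2 * phiS q.2.1 q.2.2 + q.2.1 / q.2.2 < M := by
    exact ContinuousAt.eventually_lt hhc continuousAt_const hML
  have hev2 : ∀ᶠ q in 𝓝 (((a0, 0), (a1, b1)) : (ℝ × ℝ) × (ℝ × ℝ)),
      q ∈ ({q : (ℝ × ℝ) × (ℝ × ℝ) | q.1.1 < -c} ∩ {q | q.1.2 < c / M} ∩
        {q | q.2.2 < 0}) := by
    apply IsOpen.eventually_mem
    · exact ((isOpen_lt (continuous_fst.fst) continuous_const).inter
        (isOpen_lt (continuous_fst.snd) continuous_const)).inter
        (isOpen_lt (continuous_snd.snd) continuous_const)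
    · have hdiv : 0 < c / M := div_pos hc hM
      refine ⟨⟨?_, ?_⟩, ?_⟩ <;> simp only [Set.mem_setOf_eq]
      · rw [hcdef]; linarith
      · linarith
      · exact hb1
  have hc2 : ContinuousAt
      (fun q : (ℝ × ℝ) × (ℝ × ℝ) => max (phiS q.1.1 q.1.2) (phiS q.2.1 q.2.2))
      ((a0, 0), (a1, b1)) :=
    (contAt_phi_fst (Or.inr ha0)).max (contAt_phi_snd (Or.inl hb1.ne))
  apply hc2.congr
  filter_upwards [hev1, hev2] with q h1 h2
  obtain ⟨⟨h2a, h2b⟩, h2c⟩ := h2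
  simp only [Set.mem_setOf_eq] at h2a h2b h2c
  unfold K' Km
  rcases le_or_gt q.1.2 0 with hB0 | hB0
  · rw [if_neg (by nlinarith), if_neg (fun hh => absurd hh.2 (not_le.mpr h2c))]
  · rw [if_pos (mul_neg_of_pos_of_neg hB0 h2c), if_pos hB0]
    have hkey : phiS q.2.1 q.2.2 ≤ (-q.1.1 / q.1.2 - q.2.1 / q.2.2) / 2 := by
      have hstep : M < -q.1.1 / q.1.2 := by
        rw [lt_div_iff₀ hB0]
        have h5 : M * q.1.2 < c := by
          nlinarith [mul_div_cancel₀ c hM.ne']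
        have h6 : c < -q.1.1 := by linarith
        linarith
      linarith
    rw [min_eq_left (le_trans hkey (le_max_right _ _)),
      max_eq_right (le_of_lt (lt_trans (phiS_neg_of_pos hB0) (phiS_pos_of_neg h2c)))]

lemma contAt_zz {a0 a1 : ℝ} (ha0 : a0 < 0) (ha1 : a1 < 0) :
    ContinuousAt K' ((a0, 0), (a1, 0)) := by
  have hmin : ContinuousAt
      (fun q : (ℝ × ℝ) × (ℝ × ℝ) => min (phiS q.1.1 q.1.2) (phiS q.2.1 q.2.2))
      ((a0, 0), (a1, 0)) :=
    (contAt_phi_fst (Or.inr ha0)).min (contAt_phi_snd (Or.inr ha1))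
  have hmax : ContinuousAt
      (fun q : (ℝ × ℝ) × (ℝ × ℝ) => max (phiS q.1.1 q.1.2) (phiS q.2.1 q.2.2))
      ((a0, 0), (a1, 0)) :=
    (contAt_phi_fst (Or.inr ha0)).max (contAt_phi_snd (Or.inr ha1))
  have hK : K' ((a0, 0), (a1, 0)) = 0 := by
    simp [K', Km, phiS_zero]
  unfold ContinuousAt
  rw [hK]
  refine tendsto_of_tendsto_of_tendsto_of_le_of_le
    (f := K') ?_ ?_ (fun q => min_le_Km _ _ _ _) (fun q => Km_le_max _ _ _ _)
  · simpa [phiS_zero] using hmin.tendsto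
  · simpa [phiS_zero] using hmax.tendsto

lemma contAt_swap {x y : ℝ × ℝ} (h : ContinuousAt K' (y, x)) :
    ContinuousAt K' (x, y) := by
  have hKs : K' = K' ∘ Prod.swap := by
    funext q
    simp only [Function.comp, Prod.swap, K']
    exact Km_symm _ _ _ _
  rw [hKs]
  have h2 : ContinuousAt (Prod.swap : (ℝ × ℝ) × (ℝ × ℝ) → (ℝ × ℝ) × (ℝ × ℝ))
      (x, y) := continuous_swap.continuousAt
  exact ContinuousAt.comp (f := Prod.swap) h h2

lemma Km_contAt {x y : ℝ × ℝ} (hx : x.2 ≠ 0 ∨ x.1 < 0) (hy : y.2 ≠ 0 ∨ y.1 < 0) :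
    ContinuousAt K' (x, y) := by
  obtain ⟨a0, b0⟩ := x
  obtain ⟨a1, b1⟩ := y
  simp only at hx hy
  rcases lt_trichotomy b0 0 with h0 | h0 | h0 <;>
    rcases lt_trichotomy b1 0 with h1 | h1 | h1
  · exact contAt_nn h0 h1
  · subst h1; exact contAt_swap (contAt_zn (hy.resolve_left (by simp)) h0)
  · exact contAt_swap (contAt_pn h1 h0)
  · subst h0; exact contAt_zn (hx.resolve_left (by simp)) h1
  · subst h0; subst h1
    exact contAt_zz (hx.resolve_left (by simp)) (hy.resolve_left (by simp))
  · subst h0; exact contAt_zp (hx.resolve_left (by simp)) h1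
  · exact contAt_pn h0 h1
  · subst h1; exact contAt_swap (contAt_zp (hy.resolve_left (by simp)) h0)
  · exact contAt_pp h0 h1

/-- `K_m` is continuous on `D_c`. -/
theorem stmt_16 :
    ContinuousOn (fun p : ℝ × ℝ × ℝ × ℝ => Km p.1 p.2.1 p.2.2.1 p.2.2.2) Dc := by
  intro p hp
  apply ContinuousAt.continuousWithinAt
  have heq : (fun p : ℝ × ℝ × ℝ × ℝ => Km p.1 p.2.1 p.2.2.1 p.2.2.2)
      = fun p : ℝ × ℝ × ℝ × ℝ => K' ((p.1, p.2.1), (p.2.2.1, p.2.2.2)) := rfl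
  rw [heq]
  have hx : ((p.1, p.2.1) : ℝ × ℝ).2 ≠ 0 ∨ ((p.1, p.2.1) : ℝ × ℝ).1 < 0 := by
    rcases eq_or_ne p.2.1 0 with h | h
    · exact Or.inr (hp.1 h)
    · exact Or.inl h
  have hy : ((p.2.2.1, p.2.2.2) : ℝ × ℝ).2 ≠ 0 ∨ ((p.2.2.1, p.2.2.2) : ℝ × ℝ).1 < 0 := by
    rcases eq_or_ne p.2.2.2 0 with h | h
    · exact Or.inr (hp.2.1 h)
    · exact Or.inl h
  have hg : ContinuousAt
      (fun p : ℝ × ℝ × ℝ × ℝ => (((p.1, p.2.1), (p.2.2.1, p.2.2.2)) : (ℝ × ℝ) × (ℝ × ℝ))) p :=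
    by fun_prop
  exact ContinuousAt.comp (f := fun p : ℝ × ℝ × ℝ × ℝ => (((p.1, p.2.1), (p.2.2.1, p.2.2.2)) : (ℝ × ℝ) × (ℝ × ℝ))) (Km_contAt hx hy) hg
end

section
/- The map K_l^* is continuous on the set D* = {(a₀,b₀,a₁,b₁) ∈ ℝ⁴ : (b₀ = 0 implies a₀ < 0) and (b₁ = 0 implies a₁ < 0)}; that is, K_l^* restricted to D* is continuous at every point of D*, including points where the compatibility condition -a_j/b_j < -a_i/b_i fails or holds with equality. -/
/-- Logistic weighting function `λ(z) = 1/(1+e^{-z})`. -/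
noncomputable def logisticW (z : ℝ) : ℝ := 1 / (1 + Real.exp (-z))

/-- The blended safe-stabilizing feedback law `K_l` (built from Sontag's formula).
In the region `b₀·b₁ < 0`, `i` denotes the index with `b_i > 0` and `j` the index
with `b_j < 0`, and `Δ = -a₀/b₀ - a₁/b₁`. -/
noncomputable def Kl (a0 b0 a1 b1 : ℝ) : ℝ :=
  if b0 * b1 < 0 then
    if 0 < b0 then
      -- i = 0, j = 1
      (1 - logisticW (-a0 / b0 - a1 / b1)) * max (phiS a0 b0) (-a1 / b1)
        + logisticW (-a0 / b0 - a1 / b1) * min (phiS a1 b1) (-a0 / b0)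
    else
      -- i = 1, j = 0
      (1 - logisticW (-a0 / b0 - a1 / b1)) * max (phiS a1 b1) (-a0 / b0)
        + logisticW (-a0 / b0 - a1 / b1) * min (phiS a0 b0) (-a1 / b1)
  else if 0 ≤ b0 ∧ 0 ≤ b1 then min (phiS a0 b0) (phiS a1 b1)
  else max (phiS a0 b0) (phiS a1 b1)

/-- The safety-prioritizing modification `K_l^*`: in the incompatible region
(`b₀·b₁ < 0` and `-a_j/b_j ≥ -a_i/b_i`, with `i` the index with `b_i > 0` and `j`
the index with `b_j < 0`), the feedback is `-a₁/b₁`; otherwise it is `K_l`. -/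
noncomputable def KlStar (a0 b0 a1 b1 : ℝ) : ℝ :=
  if b0 * b1 < 0 ∧
      ((0 < b0 ∧ -a0 / b0 ≤ -a1 / b1) ∨ (0 < b1 ∧ -a1 / b1 ≤ -a0 / b0)) then
    -a1 / b1
  else Kl a0 b0 a1 b1

/-- The set `D*`: points `(a₀,b₀,a₁,b₁)` satisfying the pointwise CLF and CBF
conditions (no compatibility required). -/
def Dstar : Set (ℝ × ℝ × ℝ × ℝ) :=
  {p | (p.2.1 = 0 → p.1 < 0) ∧ (p.2.2.2 = 0 → p.2.2.1 < 0)}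

/-! ### Auxiliary material -/

open Real Filter Topology

noncomputable def psi (a b : ℝ) : ℝ := -b^3 / (Real.sqrt (a^2 + b^4) - a)

lemma denom_pos {a b : ℝ} (h : a < 0 ∨ b ≠ 0) : 0 < Real.sqrt (a^2+b^4) - a := by
  have h1 : Real.sqrt (a^2) = |a| := by
    rw [← Real.sqrt_sq_eq_abs]
  rcases h with h | h
  · have h2 : |a| ≤ Real.sqrt (a^2+b^4) := by
      rw [← h1]
      exact Real.sqrt_le_sqrt (by nlinarith [sq_nonneg (b^2)])
    have h3 : -a ≤ Real.sqrt (a^2+b^4) := le_trans (neg_le_abs a) h2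
    linarith
  · have hb : 0 < b^4 := by positivity
    have h2 : Real.sqrt (a^2) < Real.sqrt (a^2+b^4) :=
      Real.sqrt_lt_sqrt (by positivity) (by linarith)
    rw [h1] at h2
    have := le_abs_self a
    linarith

lemma phiS_eq_psi {a b : ℝ} (h : a < 0 ∨ b ≠ 0) : phiS a b = psi a b := by
  by_cases hb : b = 0
  · subst hb; simp [phiS, psi]
  · have hd := denom_pos h
    have hs : Real.sqrt (a^2+b^4) ^ 2 = a^2 + b^4 := Real.sq_sqrt (by positivity)
    rw [phiS, if_pos hb, psi]
    rw [div_eq_div_iff hb (ne_of_gt hd)]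
    nlinarith [hs]

lemma psi_neg {a b : ℝ} (hb : 0 < b) : psi a b < 0 := by
  have hd := denom_pos (a := a) (Or.inr (ne_of_gt hb))
  rw [psi]
  apply div_neg_of_neg_of_pos (by nlinarith [pow_pos hb 3]) hd

lemma psi_pos {a b : ℝ} (hb : b < 0) : 0 < psi a b := by
  have hd := denom_pos (a := a) (Or.inr (ne_of_lt hb))
  rw [psi]
  apply div_pos (by nlinarith [pow_pos (neg_pos.2 hb) 3]) hd

lemma psi_zero (a : ℝ) : psi a 0 = 0 := by simp [psi]

lemma psi_lt {a b : ℝ} (hb : 0 < b) : psi a b < -a / b := by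
  rw [← phiS_eq_psi (Or.inr (ne_of_gt hb)), phiS, if_pos (ne_of_gt hb)]
  have hs : 0 < Real.sqrt (a^2+b^4) := Real.sqrt_pos.2 (by positivity)
  rw [div_lt_div_iff₀ hb hb]
  nlinarith

lemma lt_psi {a b : ℝ} (hb : b < 0) : -a / b < psi a b := by
  rw [← phiS_eq_psi (Or.inr (ne_of_lt hb)), phiS, if_pos (ne_of_lt hb)]
  have hbb : 0 < b * b := mul_pos_of_neg_of_neg hb hb
  have hs : 0 < Real.sqrt (a^2+b^4) := Real.sqrt_pos.2 (by nlinarith [sq_nonneg a, sq_nonneg (b*b)])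
  rw [div_lt_div_right_of_neg hb]
  linarith

lemma logistic_pos (z : ℝ) : 0 < logisticW z := by
  have := Real.exp_pos (-z); rw [logisticW]; positivity

lemma logistic_lt_one (z : ℝ) : logisticW z < 1 := by
  have := Real.exp_pos (-z)
  rw [logisticW, div_lt_one (by linarith)]; linarith

lemma logistic_continuous : Continuous logisticW := by
  apply Continuous.div continuous_const
  · fun_prop
  · intro z; have := Real.exp_pos (-z); positivity

lemma logistic_atBot : Tendsto logisticW atBot (𝓝 0) := by
  have h1 : Tendsto (fun z : ℝ => 1 + Real.exp (-z)) atBot atTop := by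
    apply tendsto_atTop_add_const_left
    exact Real.tendsto_exp_atTop.comp tendsto_neg_atBot_atTop
  apply h1.inv_tendsto_atTop.congr
  intro z; simp [logisticW, one_div]

lemma logistic_atTop : Tendsto logisticW atTop (𝓝 1) := by
  have h1 : Tendsto (fun z : ℝ => 1 + Real.exp (-z)) atTop (𝓝 1) := by
    have h2 : Tendsto (fun z : ℝ => Real.exp (-z)) atTop (𝓝 0) :=
      Real.tendsto_exp_atBot.comp tendsto_neg_atTop_atBot
    simpa using tendsto_const_nhds.add h2
  have h2 := h1.inv₀ (by norm_num)
  norm_num at h2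
  apply h2.congr
  intro z; simp [logisticW, one_div]

lemma tendsto_of_mem_pair {α : Type*} {l : Filter α} {f g h : α → ℝ} {L : ℝ}
    (hf : Tendsto f l (𝓝 L)) (hg : Tendsto g l (𝓝 L))
    (hh : ∀ᶠ x in l, h x = f x ∨ h x = g x) : Tendsto h l (𝓝 L) := by
  rw [Metric.tendsto_nhds] at hf hg ⊢
  intro ε hε
  filter_upwards [hf ε hε, hg ε hε, hh] with x h1 h2 h3
  rcases h3 with h3 | h3 <;> simp [h3, h1, h2]

lemma tendsto_max_atBot {α : Type*} {l : Filter α} {f g : α → ℝ} {c : ℝ}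
    (hf : Tendsto f l (𝓝 c)) (hg : Tendsto g l atBot) :
    Tendsto (fun x => max (f x) (g x)) l (𝓝 c) := by
  apply hf.congr'
  filter_upwards [hg.eventually (eventually_le_atBot (c-1)),
    hf.eventually (eventually_gt_nhds (by linarith : c - 1 < c))] with x h1 h2
  rw [max_eq_left (by linarith)]

lemma tendsto_min_atTop {α : Type*} {l : Filter α} {f g : α → ℝ} {c : ℝ}
    (hf : Tendsto f l (𝓝 c)) (hg : Tendsto g l atTop) :
    Tendsto (fun x => min (f x) (g x)) l (𝓝 c) := by
  apply hf.congr'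
  filter_upwards [hg.eventually (eventually_ge_atTop (c+1)),
    hf.eventually (eventually_lt_nhds (by linarith : c < c + 1))] with x h1 h2
  rw [min_eq_left (by linarith)]

lemma tendsto_inv_nhdsLT_zero' : Tendsto (fun x : ℝ => x⁻¹) (𝓝[<] (0:ℝ)) atBot := by
  have h1 : Tendsto (fun x : ℝ => -x) (𝓝[<] (0:ℝ)) (𝓝[>] (0:ℝ)) := by
    apply tendsto_nhdsWithin_of_tendsto_nhds_of_eventually_within
    · simpa using (continuous_neg.tendsto (0:ℝ)).mono_left nhdsWithin_le_nhds
    · filter_upwards [self_mem_nhdsWithin] with x hx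
      simpa using hx
  have h2 := tendsto_inv_nhdsGT_zero.comp h1
  have h3 := tendsto_neg_atTop_atBot.comp h2
  apply h3.congr
  intro x; simp [inv_neg]

/-! ### KlStar branch lemmas -/

lemma KlStar_min {a0 b0 a1 b1 : ℝ} (h0 : 0 ≤ b0) (h1 : 0 ≤ b1)
    (c0 : a0 < 0 ∨ b0 ≠ 0) (c1 : a1 < 0 ∨ b1 ≠ 0) :
    KlStar a0 b0 a1 b1 = min (psi a0 b0) (psi a1 b1) := by
  have hm : ¬ b0 * b1 < 0 := not_lt.2 (mul_nonneg h0 h1)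
  rw [KlStar, if_neg (by tauto), Kl, if_neg hm, if_pos ⟨h0, h1⟩,
    phiS_eq_psi c0, phiS_eq_psi c1]

lemma KlStar_max {a0 b0 a1 b1 : ℝ} (h0 : b0 ≤ 0) (h1 : b1 ≤ 0) (h : b0 < 0 ∨ b1 < 0)
    (c0 : a0 < 0 ∨ b0 ≠ 0) (c1 : a1 < 0 ∨ b1 ≠ 0) :
    KlStar a0 b0 a1 b1 = max (psi a0 b0) (psi a1 b1) := by
  have hm : ¬ b0 * b1 < 0 := not_lt.2 (by nlinarith)
  have hnand : ¬(0 ≤ b0 ∧ 0 ≤ b1) := by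
    rintro ⟨x0, x1⟩; rcases h with h | h <;> linarith
  rw [KlStar, if_neg (by tauto), Kl, if_neg hm, if_neg hnand,
    phiS_eq_psi c0, phiS_eq_psi c1]

lemma KlStar_blend0 {a0 b0 a1 b1 : ℝ} (h0 : 0 < b0) (h1 : b1 < 0)
    (hc : -a1/b1 < -a0/b0) :
    KlStar a0 b0 a1 b1 =
      (1 - logisticW (-a0/b0 - a1/b1)) * max (psi a0 b0) (-a1/b1)
        + logisticW (-a0/b0 - a1/b1) * min (psi a1 b1) (-a0/b0) := by
  have hm : b0*b1 < 0 := mul_neg_of_pos_of_neg h0 h1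
  have hnc : ¬((0 < b0 ∧ -a0/b0 ≤ -a1/b1) ∨ (0 < b1 ∧ -a1/b1 ≤ -a0/b0)) := by
    rintro (⟨_, h⟩ | ⟨h, _⟩) <;> linarith
  rw [KlStar, if_neg (by tauto), Kl, if_pos hm, if_pos h0,
    phiS_eq_psi (Or.inr h0.ne'), phiS_eq_psi (Or.inr h1.ne)]

lemma KlStar_blend1 {a0 b0 a1 b1 : ℝ} (h0 : b0 < 0) (h1 : 0 < b1)
    (hc : -a0/b0 < -a1/b1) :
    KlStar a0 b0 a1 b1 =
      (1 - logisticW (-a0/b0 - a1/b1)) * max (psi a1 b1) (-a0/b0)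
        + logisticW (-a0/b0 - a1/b1) * min (psi a0 b0) (-a1/b1) := by
  have hm : b0*b1 < 0 := mul_neg_of_neg_of_pos h0 h1
  have hnc : ¬((0 < b0 ∧ -a0/b0 ≤ -a1/b1) ∨ (0 < b1 ∧ -a1/b1 ≤ -a0/b0)) := by
    rintro (⟨h, _⟩ | ⟨_, h⟩) <;> linarith
  rw [KlStar, if_neg (by tauto), Kl, if_pos hm, if_neg (by linarith : ¬ 0 < b0),
    phiS_eq_psi (Or.inr h0.ne), phiS_eq_psi (Or.inr h1.ne')]

lemma KlStar_sw {a0 b0 a1 b1 : ℝ} (hm : b0*b1 < 0)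
    (hc : (0 < b0 ∧ -a0/b0 ≤ -a1/b1) ∨ (0 < b1 ∧ -a1/b1 ≤ -a0/b0)) :
    KlStar a0 b0 a1 b1 = -a1/b1 := by
  rw [KlStar, if_pos ⟨hm, hc⟩]

/-! ### Bounds (for the doubly-degenerate case) -/

lemma KlStar_bounds {a0 b0 a1 b1 : ℝ} (ha0 : a0 < 0) (ha1 : a1 < 0) :
    min (psi a0 b0) (psi a1 b1) ≤ KlStar a0 b0 a1 b1 ∧
      KlStar a0 b0 a1 b1 ≤ max (psi a0 b0) (psi a1 b1) := by
  set m := min (psi a0 b0) (psi a1 b1) with hm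
  set M := max (psi a0 b0) (psi a1 b1) with hM
  have hm0 : m ≤ psi a0 b0 := min_le_left _ _
  have hm1 : m ≤ psi a1 b1 := min_le_right _ _
  have hM0 : psi a0 b0 ≤ M := le_max_left _ _
  have hM1 : psi a1 b1 ≤ M := le_max_right _ _
  have hmM : m ≤ M := le_trans hm0 hM0
  rcases lt_trichotomy b0 0 with hb0 | hb0 | hb0
  · rcases lt_trichotomy b1 0 with hb1 | hb1 | hb1
    · rw [KlStar_max hb0.le hb1.le (Or.inl hb0) (Or.inl ha0) (Or.inl ha1)]
      exact ⟨hmM, le_refl _⟩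
    · subst hb1
      rw [KlStar_max hb0.le (le_refl 0) (Or.inl hb0) (Or.inl ha0) (Or.inl ha1)]
      exact ⟨hmM, le_refl _⟩
    · -- b0 < 0 < b1
      have hR0 : -a0/b0 < psi a0 b0 := lt_psi hb0
      have hR1 : psi a1 b1 < -a1/b1 := psi_lt hb1
      by_cases hc : -a1/b1 ≤ -a0/b0
      · rw [KlStar_sw (mul_neg_of_neg_of_pos hb0 hb1) (Or.inr ⟨hb1, hc⟩)]
        constructor
        · linarith
        · linarith
      · push_neg at hc
        rw [KlStar_blend1 hb0 hb1 hc]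
        set L := logisticW (-a0/b0 - a1/b1) with hL
        have hL0 : 0 < L := logistic_pos _
        have hL1 : L < 1 := logistic_lt_one _
        have hu : max (psi a1 b1) (-a0/b0) ≤ M := max_le hM1 (by linarith)
        have hu' : m ≤ max (psi a1 b1) (-a0/b0) := le_trans hm1 (le_max_left _ _)
        have hv : min (psi a0 b0) (-a1/b1) ≤ M := le_trans (min_le_left _ _) hM0
        have hv' : m ≤ min (psi a0 b0) (-a1/b1) := le_min hm0 (by linarith)
        constructor
        · nlinarith
        · nlinarith
  · subst hb0
    rcases le_or_gt 0 b1 with hb1 | hb1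
    · rw [KlStar_min (le_refl 0) hb1 (Or.inl ha0) (Or.inl ha1)]
      exact ⟨le_refl _, hmM⟩
    · rw [KlStar_max (le_refl 0) hb1.le (Or.inr hb1) (Or.inl ha0) (Or.inl ha1)]
      exact ⟨hmM, le_refl _⟩
  · rcases lt_trichotomy b1 0 with hb1 | hb1 | hb1
    · -- b1 < 0 < b0
      have hR0 : psi a0 b0 < -a0/b0 := psi_lt hb0
      have hR1 : -a1/b1 < psi a1 b1 := lt_psi hb1
      by_cases hc : -a0/b0 ≤ -a1/b1
      · rw [KlStar_sw (mul_neg_of_pos_of_neg hb0 hb1) (Or.inl ⟨hb0, hc⟩)]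
        constructor
        · linarith
        · linarith
      · push_neg at hc
        rw [KlStar_blend0 hb0 hb1 hc]
        set L := logisticW (-a0/b0 - a1/b1) with hL
        have hL0 : 0 < L := logistic_pos _
        have hL1 : L < 1 := logistic_lt_one _
        have hu : max (psi a0 b0) (-a1/b1) ≤ M := max_le hM0 (by linarith)
        have hu' : m ≤ max (psi a0 b0) (-a1/b1) := le_trans hm0 (le_max_left _ _)
        have hv : min (psi a1 b1) (-a0/b0) ≤ M := le_trans (min_le_left _ _) hM1
        have hv' : m ≤ min (psi a1 b1) (-a0/b0) := le_min hm1 (by linarith)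
        constructor
        · nlinarith
        · nlinarith
    · subst hb1
      rw [KlStar_min hb0.le (le_refl 0) (Or.inr hb0.ne') (Or.inl ha1)]
      exact ⟨le_refl _, hmM⟩
    · rw [KlStar_min hb0.le hb1.le (Or.inr hb0.ne') (Or.inr hb1.ne')]
      exact ⟨le_refl _, hmM⟩

/-! ### Composite functions on `ℝ⁴` -/

noncomputable def KS (x : ℝ×ℝ×ℝ×ℝ) : ℝ := KlStar x.1 x.2.1 x.2.2.1 x.2.2.2
noncomputable def fP0 (x : ℝ×ℝ×ℝ×ℝ) : ℝ := psi x.1 x.2.1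
noncomputable def fP1 (x : ℝ×ℝ×ℝ×ℝ) : ℝ := psi x.2.2.1 x.2.2.2
noncomputable def fR0 (x : ℝ×ℝ×ℝ×ℝ) : ℝ := -x.1 / x.2.1
noncomputable def fR1 (x : ℝ×ℝ×ℝ×ℝ) : ℝ := -x.2.2.1 / x.2.2.2
noncomputable def fL (x : ℝ×ℝ×ℝ×ℝ) : ℝ := logisticW (-x.1 / x.2.1 - x.2.2.1 / x.2.2.2)

lemma contAt_psi2 {X : Type*} [TopologicalSpace X] {f g : X → ℝ} {x : X}
    (hf : ContinuousAt f x) (hg : ContinuousAt g x) (h : f x < 0 ∨ g x ≠ 0) :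
    ContinuousAt (fun y => psi (f y) (g y)) x := by
  simp only [psi]
  have hs : ContinuousAt (fun y => Real.sqrt ((f y)^2 + (g y)^4)) x :=
    Real.continuous_sqrt.continuousAt.comp ((hf.pow 2).add (hg.pow 4))
  exact ((hg.pow 3).neg).div (hs.sub hf) (denom_pos h).ne'

lemma contAt_fP0 {x : ℝ×ℝ×ℝ×ℝ} (h : x.1 < 0 ∨ x.2.1 ≠ 0) : ContinuousAt fP0 x := by
  unfold fP0
  exact contAt_psi2 continuous_fst.continuousAt (continuous_snd.fst).continuousAt h

lemma contAt_fP1 {x : ℝ×ℝ×ℝ×ℝ} (h : x.2.2.1 < 0 ∨ x.2.2.2 ≠ 0) : ContinuousAt fP1 x := by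
  unfold fP1
  exact contAt_psi2 (continuous_snd.snd.fst).continuousAt (continuous_snd.snd.snd).continuousAt h

lemma contAt_fR0 {x : ℝ×ℝ×ℝ×ℝ} (h : x.2.1 ≠ 0) : ContinuousAt fR0 x := by
  unfold fR0
  exact (continuous_fst.neg.continuousAt).div (continuous_snd.fst).continuousAt h

lemma contAt_fR1 {x : ℝ×ℝ×ℝ×ℝ} (h : x.2.2.2 ≠ 0) : ContinuousAt fR1 x := by
  unfold fR1
  exact ((continuous_snd.snd.fst).neg.continuousAt).div (continuous_snd.snd.snd).continuousAt h

lemma contAt_fL {x : ℝ×ℝ×ℝ×ℝ} (h0 : x.2.1 ≠ 0) (h1 : x.2.2.2 ≠ 0) :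
    ContinuousAt fL x := by
  unfold fL
  apply logistic_continuous.continuousAt.comp
  exact ((continuous_fst.neg.continuousAt).div (continuous_snd.fst).continuousAt h0).sub
    ((continuous_snd.snd.fst).continuousAt.div (continuous_snd.snd.snd).continuousAt h1)

lemma contAt_Bl0 {x : ℝ×ℝ×ℝ×ℝ} (h0 : x.2.1 ≠ 0) (h1 : x.2.2.2 ≠ 0) :
    ContinuousAt (fun y => (1 - fL y) * max (fP0 y) (fR1 y) + fL y * min (fP1 y) (fR0 y)) x := by
  exact ((continuousAt_const.sub (contAt_fL h0 h1)).mul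
      ((contAt_fP0 (Or.inr h0)).max (contAt_fR1 h1))).add
    ((contAt_fL h0 h1).mul ((contAt_fP1 (Or.inr h1)).min (contAt_fR0 h0)))

lemma contAt_Bl1 {x : ℝ×ℝ×ℝ×ℝ} (h0 : x.2.1 ≠ 0) (h1 : x.2.2.2 ≠ 0) :
    ContinuousAt (fun y => (1 - fL y) * max (fP1 y) (fR0 y) + fL y * min (fP0 y) (fR1 y)) x := by
  exact ((continuousAt_const.sub (contAt_fL h0 h1)).mul
      ((contAt_fP1 (Or.inr h1)).max (contAt_fR0 h0))).add
    ((contAt_fL h0 h1).mul ((contAt_fP0 (Or.inr h0)).min (contAt_fR1 h1)))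

/-! ### Interior cases -/

lemma casePP {p : ℝ×ℝ×ℝ×ℝ} (hb0 : 0 < p.2.1) (hb1 : 0 < p.2.2.2) : ContinuousAt KS p := by
  have e0 : ∀ᶠ x : ℝ×ℝ×ℝ×ℝ in 𝓝 p, 0 < x.2.1 :=
    (continuous_snd.fst).continuousAt.eventually (eventually_gt_nhds hb0)
  have e1 : ∀ᶠ x : ℝ×ℝ×ℝ×ℝ in 𝓝 p, 0 < x.2.2.2 :=
    (continuous_snd.snd.snd).continuousAt.eventually (eventually_gt_nhds hb1)
  have heq : (fun x => min (fP0 x) (fP1 x)) =ᶠ[nhds p] KS := by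
    filter_upwards [e0, e1] with x h0 h1
    exact (KlStar_min h0.le h1.le (Or.inr h0.ne') (Or.inr h1.ne')).symm
  exact ContinuousAt.congr ((contAt_fP0 (Or.inr hb0.ne')).min (contAt_fP1 (Or.inr hb1.ne'))) heq

lemma caseNN {p : ℝ×ℝ×ℝ×ℝ} (hb0 : p.2.1 < 0) (hb1 : p.2.2.2 < 0) : ContinuousAt KS p := by
  have e0 : ∀ᶠ x : ℝ×ℝ×ℝ×ℝ in 𝓝 p, x.2.1 < 0 :=
    (continuous_snd.fst).continuousAt.eventually (eventually_lt_nhds hb0)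
  have e1 : ∀ᶠ x : ℝ×ℝ×ℝ×ℝ in 𝓝 p, x.2.2.2 < 0 :=
    (continuous_snd.snd.snd).continuousAt.eventually (eventually_lt_nhds hb1)
  have heq : (fun x => max (fP0 x) (fP1 x)) =ᶠ[nhds p] KS := by
    filter_upwards [e0, e1] with x h0 h1
    exact (KlStar_max h0.le h1.le (Or.inl h0) (Or.inr h0.ne) (Or.inr h1.ne)).symm
  exact ContinuousAt.congr ((contAt_fP0 (Or.inr hb0.ne)).max (contAt_fP1 (Or.inr hb1.ne))) heq

lemma casePN {p : ℝ×ℝ×ℝ×ℝ} (hb0 : 0 < p.2.1) (hb1 : p.2.2.2 < 0) : ContinuousAt KS p := by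
  have e0 : ∀ᶠ x : ℝ×ℝ×ℝ×ℝ in 𝓝 p, 0 < x.2.1 :=
    (continuous_snd.fst).continuousAt.eventually (eventually_gt_nhds hb0)
  have e1 : ∀ᶠ x : ℝ×ℝ×ℝ×ℝ in 𝓝 p, x.2.2.2 < 0 :=
    (continuous_snd.snd.snd).continuousAt.eventually (eventually_lt_nhds hb1)
  have hcR0 : ContinuousAt fR0 p := contAt_fR0 hb0.ne'
  have hcR1 : ContinuousAt fR1 p := contAt_fR1 hb1.ne
  rcases lt_trichotomy (fR0 p) (fR1 p) with hc | hc | hc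
  · -- strictly incompatible near p : KS = fR1
    have ec : ∀ᶠ x : ℝ×ℝ×ℝ×ℝ in 𝓝 p, fR0 x < fR1 x := by
      have h2 := (hcR1.sub hcR0).eventually (eventually_gt_nhds (sub_pos.2 hc))
      filter_upwards [h2] with x hx; simp only [Pi.sub_apply] at hx; linarith [hx]
    have heq : fR1 =ᶠ[nhds p] KS := by
      filter_upwards [e0, e1, ec] with x h0 h1 h2
      exact (KlStar_sw (mul_neg_of_pos_of_neg h0 h1) (Or.inl ⟨h0, h2.le⟩)).symm
    exact ContinuousAt.congr hcR1 heq
  · -- boundary of compatibility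
    have hBl := contAt_Bl0 hb0.ne' hb1.ne
    have h1p : fP0 p < fR0 p := psi_lt hb0
    have h2p : fR1 p < fP1 p := lt_psi hb1
    have hBlv : (1 - fL p) * max (fP0 p) (fR1 p) + fL p * min (fP1 p) (fR0 p) = fR1 p := by
      rw [max_eq_right (by linarith), min_eq_right (by linarith)]
      rw [← hc]; ring
    have hval : KS p = fR1 p :=
      KlStar_sw (mul_neg_of_pos_of_neg hb0 hb1) (Or.inl ⟨hb0, hc.le⟩)
    have key : Tendsto KS (𝓝 p) (𝓝 (KS p)) := by
      rw [hval]
      have hBl2 : Tendsto (fun y => (1 - fL y) * max (fP0 y) (fR1 y) + fL y * min (fP1 y) (fR0 y))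
          (𝓝 p) (𝓝 ((1 - fL p) * max (fP0 p) (fR1 p) + fL p * min (fP1 p) (fR0 p))) := hBl
      rw [hBlv] at hBl2
      apply tendsto_of_mem_pair hBl2 hcR1
      filter_upwards [e0, e1] with x h0 h1
      by_cases hcx : fR0 x ≤ fR1 x
      · exact Or.inr (KlStar_sw (mul_neg_of_pos_of_neg h0 h1) (Or.inl ⟨h0, hcx⟩))
      · exact Or.inl (KlStar_blend0 h0 h1 (not_le.1 hcx))
    exact key
  · -- strictly compatible near p : KS = blend0
    have ec : ∀ᶠ x : ℝ×ℝ×ℝ×ℝ in 𝓝 p, fR1 x < fR0 x := by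
      have h2 := (hcR0.sub hcR1).eventually (eventually_gt_nhds (sub_pos.2 hc))
      filter_upwards [h2] with x hx; simp only [Pi.sub_apply] at hx; linarith [hx]
    have heq : (fun y => (1 - fL y) * max (fP0 y) (fR1 y) + fL y * min (fP1 y) (fR0 y))
        =ᶠ[nhds p] KS := by
      filter_upwards [e0, e1, ec] with x h0 h1 h2
      exact (KlStar_blend0 h0 h1 h2).symm
    exact ContinuousAt.congr (contAt_Bl0 hb0.ne' hb1.ne) heq

lemma caseNP {p : ℝ×ℝ×ℝ×ℝ} (hb0 : p.2.1 < 0) (hb1 : 0 < p.2.2.2) : ContinuousAt KS p := by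
  have e0 : ∀ᶠ x : ℝ×ℝ×ℝ×ℝ in 𝓝 p, x.2.1 < 0 :=
    (continuous_snd.fst).continuousAt.eventually (eventually_lt_nhds hb0)
  have e1 : ∀ᶠ x : ℝ×ℝ×ℝ×ℝ in 𝓝 p, 0 < x.2.2.2 :=
    (continuous_snd.snd.snd).continuousAt.eventually (eventually_gt_nhds hb1)
  have hcR0 : ContinuousAt fR0 p := contAt_fR0 hb0.ne
  have hcR1 : ContinuousAt fR1 p := contAt_fR1 hb1.ne'
  rcases lt_trichotomy (fR1 p) (fR0 p) with hc | hc | hc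
  · -- strictly incompatible near p : KS = fR1
    have ec : ∀ᶠ x : ℝ×ℝ×ℝ×ℝ in 𝓝 p, fR1 x < fR0 x := by
      have h2 := (hcR0.sub hcR1).eventually (eventually_gt_nhds (sub_pos.2 hc))
      filter_upwards [h2] with x hx; simp only [Pi.sub_apply] at hx; linarith [hx]
    have heq : fR1 =ᶠ[nhds p] KS := by
      filter_upwards [e0, e1, ec] with x h0 h1 h2
      exact (KlStar_sw (mul_neg_of_neg_of_pos h0 h1) (Or.inr ⟨h1, h2.le⟩)).symm
    exact ContinuousAt.congr hcR1 heq
  · -- boundary of compatibility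
    have hBl := contAt_Bl1 hb0.ne hb1.ne'
    have h1p : fR0 p < fP0 p := lt_psi hb0
    have h2p : fP1 p < fR1 p := psi_lt hb1
    have hBlv : (1 - fL p) * max (fP1 p) (fR0 p) + fL p * min (fP0 p) (fR1 p) = fR1 p := by
      rw [max_eq_right (by linarith), min_eq_right (by linarith)]
      rw [hc]; ring
    have hval : KS p = fR1 p :=
      KlStar_sw (mul_neg_of_neg_of_pos hb0 hb1) (Or.inr ⟨hb1, hc.le⟩)
    have key : Tendsto KS (𝓝 p) (𝓝 (KS p)) := by
      rw [hval]
      have hBl2 : Tendsto (fun y => (1 - fL y) * max (fP1 y) (fR0 y) + fL y * min (fP0 y) (fR1 y))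
          (𝓝 p) (𝓝 ((1 - fL p) * max (fP1 p) (fR0 p) + fL p * min (fP0 p) (fR1 p))) := hBl
      rw [hBlv] at hBl2
      apply tendsto_of_mem_pair hBl2 hcR1
      filter_upwards [e0, e1] with x h0 h1
      by_cases hcx : fR1 x ≤ fR0 x
      · exact Or.inr (KlStar_sw (mul_neg_of_neg_of_pos h0 h1) (Or.inr ⟨h1, hcx⟩))
      · exact Or.inl (KlStar_blend1 h0 h1 (not_le.1 hcx))
    exact key
  · -- strictly compatible near p : KS = blend1
    have ec : ∀ᶠ x : ℝ×ℝ×ℝ×ℝ in 𝓝 p, fR0 x < fR1 x := by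
      have h2 := (hcR1.sub hcR0).eventually (eventually_gt_nhds (sub_pos.2 hc))
      filter_upwards [h2] with x hx; simp only [Pi.sub_apply] at hx; linarith [hx]
    have heq : (fun y => (1 - fL y) * max (fP1 y) (fR0 y) + fL y * min (fP0 y) (fR1 y))
        =ᶠ[nhds p] KS := by
      filter_upwards [e0, e1, ec] with x h0 h1 h2
      exact (KlStar_blend1 h0 h1 h2).symm
    exact ContinuousAt.congr (contAt_Bl1 hb0.ne hb1.ne') heq

/-! ### Boundary cases -/

lemma tendsto_b0_neg {p : ℝ×ℝ×ℝ×ℝ} (hb0 : p.2.1 = 0) :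
    Tendsto (fun x : ℝ×ℝ×ℝ×ℝ => x.2.1) (𝓝[{x : ℝ×ℝ×ℝ×ℝ | x.2.1 < 0}] p) (𝓝[<] (0:ℝ)) := by
  apply tendsto_nhdsWithin_of_tendsto_nhds_of_eventually_within
  · have h1 : Tendsto (fun x : ℝ×ℝ×ℝ×ℝ => x.2.1) (𝓝 p) (𝓝 p.2.1) :=
      (continuous_snd.fst).continuousAt
    rw [hb0] at h1
    exact h1.mono_left nhdsWithin_le_nhds
  · filter_upwards [eventually_mem_nhdsWithin] with x hx
    exact hx

lemma tendsto_b0_pos {p : ℝ×ℝ×ℝ×ℝ} (hb0 : p.2.1 = 0) :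
    Tendsto (fun x : ℝ×ℝ×ℝ×ℝ => x.2.1) (𝓝[{x : ℝ×ℝ×ℝ×ℝ | 0 < x.2.1}] p) (𝓝[>] (0:ℝ)) := by
  apply tendsto_nhdsWithin_of_tendsto_nhds_of_eventually_within
  · have h1 : Tendsto (fun x : ℝ×ℝ×ℝ×ℝ => x.2.1) (𝓝 p) (𝓝 p.2.1) :=
      (continuous_snd.fst).continuousAt
    rw [hb0] at h1
    exact h1.mono_left nhdsWithin_le_nhds
  · filter_upwards [eventually_mem_nhdsWithin] with x hx
    exact hx

lemma tendsto_b1_neg {p : ℝ×ℝ×ℝ×ℝ} (hb1 : p.2.2.2 = 0) :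
    Tendsto (fun x : ℝ×ℝ×ℝ×ℝ => x.2.2.2) (𝓝[{x : ℝ×ℝ×ℝ×ℝ | x.2.2.2 < 0}] p) (𝓝[<] (0:ℝ)) := by
  apply tendsto_nhdsWithin_of_tendsto_nhds_of_eventually_within
  · have h1 : Tendsto (fun x : ℝ×ℝ×ℝ×ℝ => x.2.2.2) (𝓝 p) (𝓝 p.2.2.2) :=
      (continuous_snd.snd.snd).continuousAt
    rw [hb1] at h1
    exact h1.mono_left nhdsWithin_le_nhds
  · filter_upwards [eventually_mem_nhdsWithin] with x hx
    exact hx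

lemma tendsto_b1_pos {p : ℝ×ℝ×ℝ×ℝ} (hb1 : p.2.2.2 = 0) :
    Tendsto (fun x : ℝ×ℝ×ℝ×ℝ => x.2.2.2) (𝓝[{x : ℝ×ℝ×ℝ×ℝ | 0 < x.2.2.2}] p) (𝓝[>] (0:ℝ)) := by
  apply tendsto_nhdsWithin_of_tendsto_nhds_of_eventually_within
  · have h1 : Tendsto (fun x : ℝ×ℝ×ℝ×ℝ => x.2.2.2) (𝓝 p) (𝓝 p.2.2.2) :=
      (continuous_snd.snd.snd).continuousAt
    rw [hb1] at h1
    exact h1.mono_left nhdsWithin_le_nhds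
  · filter_upwards [eventually_mem_nhdsWithin] with x hx
    exact hx

lemma split_b0 (p : ℝ×ℝ×ℝ×ℝ) :
    𝓝 p = 𝓝[{x : ℝ×ℝ×ℝ×ℝ | x.2.1 < 0}] p ⊔ 𝓝[{x : ℝ×ℝ×ℝ×ℝ | 0 ≤ x.2.1}] p := by
  rw [← nhdsWithin_union]
  have : {x : ℝ×ℝ×ℝ×ℝ | x.2.1 < 0} ∪ {x : ℝ×ℝ×ℝ×ℝ | 0 ≤ x.2.1} = Set.univ := by
    ext x; simp [lt_or_ge]
  rw [this, nhdsWithin_univ]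

lemma split_b0' (p : ℝ×ℝ×ℝ×ℝ) :
    𝓝 p = 𝓝[{x : ℝ×ℝ×ℝ×ℝ | 0 < x.2.1}] p ⊔ 𝓝[{x : ℝ×ℝ×ℝ×ℝ | x.2.1 ≤ 0}] p := by
  rw [← nhdsWithin_union]
  have : {x : ℝ×ℝ×ℝ×ℝ | 0 < x.2.1} ∪ {x : ℝ×ℝ×ℝ×ℝ | x.2.1 ≤ 0} = Set.univ := by
    ext x; simp [lt_or_ge]
  rw [this, nhdsWithin_univ]

lemma split_b1 (p : ℝ×ℝ×ℝ×ℝ) :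
    𝓝 p = 𝓝[{x : ℝ×ℝ×ℝ×ℝ | x.2.2.2 < 0}] p ⊔ 𝓝[{x : ℝ×ℝ×ℝ×ℝ | 0 ≤ x.2.2.2}] p := by
  rw [← nhdsWithin_union]
  have : {x : ℝ×ℝ×ℝ×ℝ | x.2.2.2 < 0} ∪ {x : ℝ×ℝ×ℝ×ℝ | 0 ≤ x.2.2.2} = Set.univ := by
    ext x; simp [lt_or_ge]
  rw [this, nhdsWithin_univ]

lemma split_b1' (p : ℝ×ℝ×ℝ×ℝ) :
    𝓝 p = 𝓝[{x : ℝ×ℝ×ℝ×ℝ | 0 < x.2.2.2}] p ⊔ 𝓝[{x : ℝ×ℝ×ℝ×ℝ | x.2.2.2 ≤ 0}] p := by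
  rw [← nhdsWithin_union]
  have : {x : ℝ×ℝ×ℝ×ℝ | 0 < x.2.2.2} ∪ {x : ℝ×ℝ×ℝ×ℝ | x.2.2.2 ≤ 0} = Set.univ := by
    ext x; simp [lt_or_ge]
  rw [this, nhdsWithin_univ]

lemma caseZP {p : ℝ×ℝ×ℝ×ℝ} (hb0 : p.2.1 = 0) (ha0 : p.1 < 0) (hb1 : 0 < p.2.2.2) :
    ContinuousAt KS p := by
  have hcP1 : ContinuousAt fP1 p := contAt_fP1 (Or.inr hb1.ne')
  have hcP0 : ContinuousAt fP0 p := contAt_fP0 (Or.inl ha0)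
  have hval : KS p = fP1 p := by
    show KlStar p.1 p.2.1 p.2.2.1 p.2.2.2 = fP1 p
    rw [KlStar_min (le_of_eq hb0.symm) hb1.le (Or.inl ha0) (Or.inr hb1.ne'),
      hb0, psi_zero, min_eq_right (psi_neg hb1).le]
    rfl
  have key : Tendsto KS (𝓝 p) (𝓝 (fP1 p)) := by
    rw [split_b0 p, tendsto_sup]
    constructor
    · -- within b0 < 0 : blend1 branch
      set l := 𝓝[{x : ℝ×ℝ×ℝ×ℝ | x.2.1 < 0}] p with hl
      have hmem : ∀ᶠ x in l, x.2.1 < 0 := eventually_mem_nhdsWithin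
      have hb1e : ∀ᶠ x in l, 0 < x.2.2.2 :=
        (((continuous_snd.snd.snd).continuousAt (x := p)).mono_left
          nhdsWithin_le_nhds).eventually (eventually_gt_nhds hb1)
      have hInv : Tendsto (fun x : ℝ×ℝ×ℝ×ℝ => (x.2.1)⁻¹) l atBot :=
        tendsto_inv_nhdsLT_zero'.comp (tendsto_b0_neg hb0)
      have hnum : Tendsto (fun x : ℝ×ℝ×ℝ×ℝ => -x.1) l (𝓝 (-p.1)) :=
        ((continuous_fst.neg).continuousAt (x := p)).mono_left nhdsWithin_le_nhds
      have hR0bot : Tendsto fR0 l atBot := by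
        have h2 := hInv.atBot_mul_pos (by linarith : 0 < -p.1) hnum
        apply h2.congr
        intro x; simp only [fR0]; rw [div_eq_mul_inv, mul_comm]
      have hR1 : Tendsto fR1 l (𝓝 (fR1 p)) :=
        (contAt_fR1 hb1.ne').mono_left nhdsWithin_le_nhds
      have hDbot : Tendsto (fun x : ℝ×ℝ×ℝ×ℝ => -x.1/x.2.1 - x.2.2.1/x.2.2.2) l atBot := by
        have h2 := hR0bot.atBot_add hR1
        apply h2.congr
        intro x; simp only [fR0, fR1]; ring
      have hLt : Tendsto fL l (𝓝 0) := logistic_atBot.comp hDbot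
      have hP1t : Tendsto fP1 l (𝓝 (fP1 p)) := hcP1.mono_left nhdsWithin_le_nhds
      have hmaxt : Tendsto (fun x => max (fP1 x) (fR0 x)) l (𝓝 (fP1 p)) :=
        tendsto_max_atBot hP1t hR0bot
      have hP0t : Tendsto fP0 l (𝓝 (fP0 p)) := hcP0.mono_left nhdsWithin_le_nhds
      have hmint : Tendsto (fun x => min (fP0 x) (fR1 x)) l (𝓝 (min (fP0 p) (fR1 p))) :=
        hP0t.min hR1
      have hBl : Tendsto (fun x => (1 - fL x) * max (fP1 x) (fR0 x) + fL x * min (fP0 x) (fR1 x))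
          l (𝓝 (fP1 p)) := by
        have hOne : Tendsto (fun _ : ℝ×ℝ×ℝ×ℝ => (1:ℝ)) l (𝓝 1) := tendsto_const_nhds
        have h2 := ((hOne.sub hLt).mul hmaxt).add (hLt.mul hmint)
        simpa using h2
      apply hBl.congr'
      have hev : ∀ᶠ x in l, fR0 x < fR1 x := by
        filter_upwards [hR0bot.eventually (eventually_le_atBot (fR1 p - 1)),
          hR1.eventually (eventually_gt_nhds (by linarith : fR1 p - 1 < fR1 p))] with x hx1 hx2
        linarith
      filter_upwards [hmem, hb1e, hev] with x h0 h1 h2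
      exact (KlStar_blend1 h0 h1 h2).symm
    · -- within 0 ≤ b0 : min branch
      set l := 𝓝[{x : ℝ×ℝ×ℝ×ℝ | 0 ≤ x.2.1}] p with hl
      have hmem : ∀ᶠ x in l, 0 ≤ x.2.1 := eventually_mem_nhdsWithin
      have hb1e : ∀ᶠ x in l, 0 < x.2.2.2 :=
        (((continuous_snd.snd.snd).continuousAt (x := p)).mono_left
          nhdsWithin_le_nhds).eventually (eventually_gt_nhds hb1)
      have ha0e : ∀ᶠ x in l, x.1 < 0 :=
        ((continuous_fst.continuousAt (x := p)).mono_left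
          nhdsWithin_le_nhds).eventually (eventually_lt_nhds ha0)
      have hMint : Tendsto (fun x => min (fP0 x) (fP1 x)) l (𝓝 (min (fP0 p) (fP1 p))) :=
        ((hcP0.min hcP1).mono_left nhdsWithin_le_nhds)
      have hvv : min (fP0 p) (fP1 p) = fP1 p := by
        show min (psi p.1 p.2.1) (fP1 p) = fP1 p
        rw [hb0, psi_zero]
        exact min_eq_right (psi_neg hb1).le
      rw [hvv] at hMint
      apply hMint.congr'
      filter_upwards [hmem, hb1e, ha0e] with x h0 h1 h2
      exact (KlStar_min h0 h1.le (Or.inl h2) (Or.inr h1.ne')).symm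
  show Tendsto KS (𝓝 p) (𝓝 (KS p))
  rw [hval]
  exact key

lemma caseZN {p : ℝ×ℝ×ℝ×ℝ} (hb0 : p.2.1 = 0) (ha0 : p.1 < 0) (hb1 : p.2.2.2 < 0) :
    ContinuousAt KS p := by
  have hcP1 : ContinuousAt fP1 p := contAt_fP1 (Or.inr hb1.ne)
  have hcP0 : ContinuousAt fP0 p := contAt_fP0 (Or.inl ha0)
  have hval : KS p = fP1 p := by
    show KlStar p.1 p.2.1 p.2.2.1 p.2.2.2 = fP1 p
    rw [KlStar_max (le_of_eq hb0) hb1.le (Or.inr hb1) (Or.inl ha0) (Or.inr hb1.ne),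
      hb0, psi_zero, max_eq_right (psi_pos hb1).le]
    rfl
  have key : Tendsto KS (𝓝 p) (𝓝 (fP1 p)) := by
    rw [split_b0' p, tendsto_sup]
    constructor
    · -- within 0 < b0 : blend0 branch
      set l := 𝓝[{x : ℝ×ℝ×ℝ×ℝ | 0 < x.2.1}] p with hl
      have hmem : ∀ᶠ x in l, 0 < x.2.1 := eventually_mem_nhdsWithin
      have hb1e : ∀ᶠ x in l, x.2.2.2 < 0 :=
        (((continuous_snd.snd.snd).continuousAt (x := p)).mono_left
          nhdsWithin_le_nhds).eventually (eventually_lt_nhds hb1)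
      have hInv : Tendsto (fun x : ℝ×ℝ×ℝ×ℝ => (x.2.1)⁻¹) l atTop :=
        tendsto_inv_nhdsGT_zero.comp (tendsto_b0_pos hb0)
      have hnum : Tendsto (fun x : ℝ×ℝ×ℝ×ℝ => -x.1) l (𝓝 (-p.1)) :=
        ((continuous_fst.neg).continuousAt (x := p)).mono_left nhdsWithin_le_nhds
      have hR0top : Tendsto fR0 l atTop := by
        have h2 := hInv.atTop_mul_pos (by linarith : 0 < -p.1) hnum
        apply h2.congr
        intro x; simp only [fR0]; rw [div_eq_mul_inv, mul_comm]
      have hR1 : Tendsto fR1 l (𝓝 (fR1 p)) :=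
        (contAt_fR1 hb1.ne).mono_left nhdsWithin_le_nhds
      have hDtop : Tendsto (fun x : ℝ×ℝ×ℝ×ℝ => -x.1/x.2.1 - x.2.2.1/x.2.2.2) l atTop := by
        have h2 := hR0top.atTop_add hR1
        apply h2.congr
        intro x; simp only [fR0, fR1]; ring
      have hLt : Tendsto fL l (𝓝 1) := logistic_atTop.comp hDtop
      have hP1t : Tendsto fP1 l (𝓝 (fP1 p)) := hcP1.mono_left nhdsWithin_le_nhds
      have hmint : Tendsto (fun x => min (fP1 x) (fR0 x)) l (𝓝 (fP1 p)) :=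
        tendsto_min_atTop hP1t hR0top
      have hP0t : Tendsto fP0 l (𝓝 (fP0 p)) := hcP0.mono_left nhdsWithin_le_nhds
      have hmaxt : Tendsto (fun x => max (fP0 x) (fR1 x)) l (𝓝 (max (fP0 p) (fR1 p))) :=
        hP0t.max hR1
      have hBl : Tendsto (fun x => (1 - fL x) * max (fP0 x) (fR1 x) + fL x * min (fP1 x) (fR0 x))
          l (𝓝 (fP1 p)) := by
        have hOne : Tendsto (fun _ : ℝ×ℝ×ℝ×ℝ => (1:ℝ)) l (𝓝 1) := tendsto_const_nhds
        have h2 := ((hOne.sub hLt).mul hmaxt).add (hLt.mul hmint)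
        simpa using h2
      apply hBl.congr'
      have hev : ∀ᶠ x in l, fR1 x < fR0 x := by
        filter_upwards [hR0top.eventually (eventually_ge_atTop (fR1 p + 1)),
          hR1.eventually (eventually_lt_nhds (by linarith : fR1 p < fR1 p + 1))] with x hx1 hx2
        linarith
      filter_upwards [hmem, hb1e, hev] with x h0 h1 h2
      exact (KlStar_blend0 h0 h1 h2).symm
    · -- within b0 ≤ 0 : max branch
      set l := 𝓝[{x : ℝ×ℝ×ℝ×ℝ | x.2.1 ≤ 0}] p with hl
      have hmem : ∀ᶠ x in l, x.2.1 ≤ 0 := eventually_mem_nhdsWithin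
      have hb1e : ∀ᶠ x in l, x.2.2.2 < 0 :=
        (((continuous_snd.snd.snd).continuousAt (x := p)).mono_left
          nhdsWithin_le_nhds).eventually (eventually_lt_nhds hb1)
      have ha0e : ∀ᶠ x in l, x.1 < 0 :=
        ((continuous_fst.continuousAt (x := p)).mono_left
          nhdsWithin_le_nhds).eventually (eventually_lt_nhds ha0)
      have hMaxt : Tendsto (fun x => max (fP0 x) (fP1 x)) l (𝓝 (max (fP0 p) (fP1 p))) :=
        ((hcP0.max hcP1).mono_left nhdsWithin_le_nhds)
      have hvv : max (fP0 p) (fP1 p) = fP1 p := by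
        show max (psi p.1 p.2.1) (fP1 p) = fP1 p
        rw [hb0, psi_zero]
        exact max_eq_right (psi_pos hb1).le
      rw [hvv] at hMaxt
      apply hMaxt.congr'
      filter_upwards [hmem, hb1e, ha0e] with x h0 h1 h2
      exact (KlStar_max h0 h1.le (Or.inr h1) (Or.inl h2) (Or.inr h1.ne)).symm
  show Tendsto KS (𝓝 p) (𝓝 (KS p))
  rw [hval]
  exact key

lemma casePZ {p : ℝ×ℝ×ℝ×ℝ} (hb0 : 0 < p.2.1) (hb1 : p.2.2.2 = 0) (ha1 : p.2.2.1 < 0) :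
    ContinuousAt KS p := by
  have hcP0 : ContinuousAt fP0 p := contAt_fP0 (Or.inr hb0.ne')
  have hcP1 : ContinuousAt fP1 p := contAt_fP1 (Or.inl ha1)
  have hval : KS p = fP0 p := by
    show KlStar p.1 p.2.1 p.2.2.1 p.2.2.2 = fP0 p
    rw [KlStar_min hb0.le (le_of_eq hb1.symm) (Or.inr hb0.ne') (Or.inl ha1),
      hb1, psi_zero, min_eq_left (psi_neg hb0).le]
    rfl
  have key : Tendsto KS (𝓝 p) (𝓝 (fP0 p)) := by
    rw [split_b1 p, tendsto_sup]
    constructor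
    · -- within b1 < 0 : blend0 branch
      set l := 𝓝[{x : ℝ×ℝ×ℝ×ℝ | x.2.2.2 < 0}] p with hl
      have hmem : ∀ᶠ x in l, x.2.2.2 < 0 := eventually_mem_nhdsWithin
      have hb0e : ∀ᶠ x in l, 0 < x.2.1 :=
        (((continuous_snd.fst).continuousAt (x := p)).mono_left
          nhdsWithin_le_nhds).eventually (eventually_gt_nhds hb0)
      have hInv : Tendsto (fun x : ℝ×ℝ×ℝ×ℝ => (x.2.2.2)⁻¹) l atBot :=
        tendsto_inv_nhdsLT_zero'.comp (tendsto_b1_neg hb1)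
      have hnum : Tendsto (fun x : ℝ×ℝ×ℝ×ℝ => -x.2.2.1) l (𝓝 (-p.2.2.1)) :=
        ((continuous_snd.snd.fst.neg).continuousAt (x := p)).mono_left nhdsWithin_le_nhds
      have hR1bot : Tendsto fR1 l atBot := by
        have h2 := hInv.atBot_mul_pos (by linarith : 0 < -p.2.2.1) hnum
        apply h2.congr
        intro x; simp only [fR1]; rw [div_eq_mul_inv, mul_comm]
      have hR0 : Tendsto fR0 l (𝓝 (fR0 p)) :=
        (contAt_fR0 hb0.ne').mono_left nhdsWithin_le_nhds
      have hDbot : Tendsto (fun x : ℝ×ℝ×ℝ×ℝ => -x.1/x.2.1 - x.2.2.1/x.2.2.2) l atBot := by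
        have h2 := hR0.add_atBot hR1bot
        apply h2.congr
        intro x; simp only [fR0, fR1]; ring
      have hLt : Tendsto fL l (𝓝 0) := logistic_atBot.comp hDbot
      have hP0t : Tendsto fP0 l (𝓝 (fP0 p)) := hcP0.mono_left nhdsWithin_le_nhds
      have hmaxt : Tendsto (fun x => max (fP0 x) (fR1 x)) l (𝓝 (fP0 p)) :=
        tendsto_max_atBot hP0t hR1bot
      have hP1t : Tendsto fP1 l (𝓝 (fP1 p)) := hcP1.mono_left nhdsWithin_le_nhds
      have hmint : Tendsto (fun x => min (fP1 x) (fR0 x)) l (𝓝 (min (fP1 p) (fR0 p))) :=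
        hP1t.min hR0
      have hBl : Tendsto (fun x => (1 - fL x) * max (fP0 x) (fR1 x) + fL x * min (fP1 x) (fR0 x))
          l (𝓝 (fP0 p)) := by
        have hOne : Tendsto (fun _ : ℝ×ℝ×ℝ×ℝ => (1:ℝ)) l (𝓝 1) := tendsto_const_nhds
        have h2 := ((hOne.sub hLt).mul hmaxt).add (hLt.mul hmint)
        simpa using h2
      apply hBl.congr'
      have hev : ∀ᶠ x in l, fR1 x < fR0 x := by
        filter_upwards [hR1bot.eventually (eventually_le_atBot (fR0 p - 1)),
          hR0.eventually (eventually_gt_nhds (by linarith : fR0 p - 1 < fR0 p))] with x hx1 hx2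
        linarith
      filter_upwards [hmem, hb0e, hev] with x h1 h0 h2
      exact (KlStar_blend0 h0 h1 h2).symm
    · -- within 0 ≤ b1 : min branch
      set l := 𝓝[{x : ℝ×ℝ×ℝ×ℝ | 0 ≤ x.2.2.2}] p with hl
      have hmem : ∀ᶠ x in l, 0 ≤ x.2.2.2 := eventually_mem_nhdsWithin
      have hb0e : ∀ᶠ x in l, 0 < x.2.1 :=
        (((continuous_snd.fst).continuousAt (x := p)).mono_left
          nhdsWithin_le_nhds).eventually (eventually_gt_nhds hb0)
      have ha1e : ∀ᶠ x in l, x.2.2.1 < 0 :=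
        (((continuous_snd.snd.fst).continuousAt (x := p)).mono_left
          nhdsWithin_le_nhds).eventually (eventually_lt_nhds ha1)
      have hMint : Tendsto (fun x => min (fP0 x) (fP1 x)) l (𝓝 (min (fP0 p) (fP1 p))) :=
        ((hcP0.min hcP1).mono_left nhdsWithin_le_nhds)
      have hvv : min (fP0 p) (fP1 p) = fP0 p := by
        show min (fP0 p) (psi p.2.2.1 p.2.2.2) = fP0 p
        rw [hb1, psi_zero]
        exact min_eq_left (psi_neg hb0).le
      rw [hvv] at hMint
      apply hMint.congr'
      filter_upwards [hmem, hb0e, ha1e] with x h1 h0 h2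
      exact (KlStar_min h0.le h1 (Or.inr h0.ne') (Or.inl h2)).symm
  show Tendsto KS (𝓝 p) (𝓝 (KS p))
  rw [hval]
  exact key

lemma caseNZ {p : ℝ×ℝ×ℝ×ℝ} (hb0 : p.2.1 < 0) (hb1 : p.2.2.2 = 0) (ha1 : p.2.2.1 < 0) :
    ContinuousAt KS p := by
  have hcP0 : ContinuousAt fP0 p := contAt_fP0 (Or.inr hb0.ne)
  have hcP1 : ContinuousAt fP1 p := contAt_fP1 (Or.inl ha1)
  have hval : KS p = fP0 p := by
    show KlStar p.1 p.2.1 p.2.2.1 p.2.2.2 = fP0 p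
    rw [KlStar_max hb0.le (le_of_eq hb1) (Or.inl hb0) (Or.inr hb0.ne) (Or.inl ha1),
      hb1, psi_zero, max_eq_left (psi_pos hb0).le]
    rfl
  have key : Tendsto KS (𝓝 p) (𝓝 (fP0 p)) := by
    rw [split_b1' p, tendsto_sup]
    constructor
    · -- within 0 < b1 : blend1 branch
      set l := 𝓝[{x : ℝ×ℝ×ℝ×ℝ | 0 < x.2.2.2}] p with hl
      have hmem : ∀ᶠ x in l, 0 < x.2.2.2 := eventually_mem_nhdsWithin
      have hb0e : ∀ᶠ x in l, x.2.1 < 0 :=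
        (((continuous_snd.fst).continuousAt (x := p)).mono_left
          nhdsWithin_le_nhds).eventually (eventually_lt_nhds hb0)
      have hInv : Tendsto (fun x : ℝ×ℝ×ℝ×ℝ => (x.2.2.2)⁻¹) l atTop :=
        tendsto_inv_nhdsGT_zero.comp (tendsto_b1_pos hb1)
      have hnum : Tendsto (fun x : ℝ×ℝ×ℝ×ℝ => -x.2.2.1) l (𝓝 (-p.2.2.1)) :=
        ((continuous_snd.snd.fst.neg).continuousAt (x := p)).mono_left nhdsWithin_le_nhds
      have hR1top : Tendsto fR1 l atTop := by
        have h2 := hInv.atTop_mul_pos (by linarith : 0 < -p.2.2.1) hnum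
        apply h2.congr
        intro x; simp only [fR1]; rw [div_eq_mul_inv, mul_comm]
      have hR0 : Tendsto fR0 l (𝓝 (fR0 p)) :=
        (contAt_fR0 hb0.ne).mono_left nhdsWithin_le_nhds
      have hDtop : Tendsto (fun x : ℝ×ℝ×ℝ×ℝ => -x.1/x.2.1 - x.2.2.1/x.2.2.2) l atTop := by
        have h2 := hR0.add_atTop hR1top
        apply h2.congr
        intro x; simp only [fR0, fR1]; ring
      have hLt : Tendsto fL l (𝓝 1) := logistic_atTop.comp hDtop
      have hP0t : Tendsto fP0 l (𝓝 (fP0 p)) := hcP0.mono_left nhdsWithin_le_nhds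
      have hmint : Tendsto (fun x => min (fP0 x) (fR1 x)) l (𝓝 (fP0 p)) :=
        tendsto_min_atTop hP0t hR1top
      have hP1t : Tendsto fP1 l (𝓝 (fP1 p)) := hcP1.mono_left nhdsWithin_le_nhds
      have hmaxt : Tendsto (fun x => max (fP1 x) (fR0 x)) l (𝓝 (max (fP1 p) (fR0 p))) :=
        hP1t.max hR0
      have hBl : Tendsto (fun x => (1 - fL x) * max (fP1 x) (fR0 x) + fL x * min (fP0 x) (fR1 x))
          l (𝓝 (fP0 p)) := by
        have hOne : Tendsto (fun _ : ℝ×ℝ×ℝ×ℝ => (1:ℝ)) l (𝓝 1) := tendsto_const_nhds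
        have h2 := ((hOne.sub hLt).mul hmaxt).add (hLt.mul hmint)
        simpa using h2
      apply hBl.congr'
      have hev : ∀ᶠ x in l, fR0 x < fR1 x := by
        filter_upwards [hR1top.eventually (eventually_ge_atTop (fR0 p + 1)),
          hR0.eventually (eventually_lt_nhds (by linarith : fR0 p < fR0 p + 1))] with x hx1 hx2
        linarith
      filter_upwards [hmem, hb0e, hev] with x h1 h0 h2
      exact (KlStar_blend1 h0 h1 h2).symm
    · -- within b1 ≤ 0 : max branch
      set l := 𝓝[{x : ℝ×ℝ×ℝ×ℝ | x.2.2.2 ≤ 0}] p with hl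
      have hmem : ∀ᶠ x in l, x.2.2.2 ≤ 0 := eventually_mem_nhdsWithin
      have hb0e : ∀ᶠ x in l, x.2.1 < 0 :=
        (((continuous_snd.fst).continuousAt (x := p)).mono_left
          nhdsWithin_le_nhds).eventually (eventually_lt_nhds hb0)
      have ha1e : ∀ᶠ x in l, x.2.2.1 < 0 :=
        (((continuous_snd.snd.fst).continuousAt (x := p)).mono_left
          nhdsWithin_le_nhds).eventually (eventually_lt_nhds ha1)
      have hMaxt : Tendsto (fun x => max (fP0 x) (fP1 x)) l (𝓝 (max (fP0 p) (fP1 p))) :=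
        ((hcP0.max hcP1).mono_left nhdsWithin_le_nhds)
      have hvv : max (fP0 p) (fP1 p) = fP0 p := by
        show max (fP0 p) (psi p.2.2.1 p.2.2.2) = fP0 p
        rw [hb1, psi_zero]
        exact max_eq_left (psi_pos hb0).le
      rw [hvv] at hMaxt
      apply hMaxt.congr'
      filter_upwards [hmem, hb0e, ha1e] with x h1 h0 h2
      exact (KlStar_max h0.le h1 (Or.inl h0) (Or.inr h0.ne) (Or.inl h2)).symm
  show Tendsto KS (𝓝 p) (𝓝 (KS p))
  rw [hval]
  exact key

lemma caseZZ {p : ℝ×ℝ×ℝ×ℝ} (hb0 : p.2.1 = 0) (ha0 : p.1 < 0) (hb1 : p.2.2.2 = 0)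
    (ha1 : p.2.2.1 < 0) : ContinuousAt KS p := by
  have hcP0 : ContinuousAt fP0 p := contAt_fP0 (Or.inl ha0)
  have hcP1 : ContinuousAt fP1 p := contAt_fP1 (Or.inl ha1)
  have e0 : ∀ᶠ x : ℝ×ℝ×ℝ×ℝ in 𝓝 p, x.1 < 0 :=
    continuous_fst.continuousAt.eventually (eventually_lt_nhds ha0)
  have e1 : ∀ᶠ x : ℝ×ℝ×ℝ×ℝ in 𝓝 p, x.2.2.1 < 0 :=
    (continuous_snd.snd.fst).continuousAt.eventually (eventually_lt_nhds ha1)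
  have hval : KS p = 0 := by
    show KlStar p.1 p.2.1 p.2.2.1 p.2.2.2 = 0
    rw [KlStar_min (le_of_eq hb0.symm) (le_of_eq hb1.symm) (Or.inl ha0) (Or.inl ha1),
      hb0, hb1, psi_zero, psi_zero]
    simp
  have hvv0 : fP0 p = 0 := by show psi p.1 p.2.1 = 0; rw [hb0, psi_zero]
  have hvv1 : fP1 p = 0 := by show psi p.2.2.1 p.2.2.2 = 0; rw [hb1, psi_zero]
  have hminT : Tendsto (fun x => min (fP0 x) (fP1 x)) (𝓝 p) (𝓝 0) := by
    have h2 := hcP0.min hcP1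
    have : min (fP0 p) (fP1 p) = 0 := by rw [hvv0, hvv1]; simp
    rw [this] at h2
    exact h2
  have hmaxT : Tendsto (fun x => max (fP0 x) (fP1 x)) (𝓝 p) (𝓝 0) := by
    have h2 := hcP0.max hcP1
    have : max (fP0 p) (fP1 p) = 0 := by rw [hvv0, hvv1]; simp
    rw [this] at h2
    exact h2
  show Tendsto KS (𝓝 p) (𝓝 (KS p))
  rw [hval]
  apply tendsto_of_tendsto_of_tendsto_of_le_of_le' hminT hmaxT
  · filter_upwards [e0, e1] with x h0 h1
    exact (KlStar_bounds h0 h1).1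
  · filter_upwards [e0, e1] with x h0 h1
    exact (KlStar_bounds h0 h1).2

/-- `K_l^*` is continuous on `D*`, including points where the
compatibility condition fails or holds with equality. -/
theorem stmt_17 :
    ContinuousOn (fun p : ℝ × ℝ × ℝ × ℝ => KlStar p.1 p.2.1 p.2.2.1 p.2.2.2)
      Dstar := by
  intro p hp
  obtain ⟨hp0, hp1⟩ := hp
  have : ContinuousAt KS p := by
    rcases lt_trichotomy p.2.1 0 with hb0 | hb0 | hb0 <;>
      rcases lt_trichotomy p.2.2.2 0 with hb1 | hb1 | hb1
    · exact caseNN hb0 hb1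
    · exact caseNZ hb0 hb1 (hp1 hb1)
    · exact caseNP hb0 hb1
    · exact caseZN hb0 (hp0 hb0) hb1
    · exact caseZZ hb0 (hp0 hb0) hb1 (hp1 hb1)
    · exact caseZP hb0 (hp0 hb0) hb1
    · exact casePN hb0 hb1
    · exact casePZ hb0 hb1 (hp1 hb1)
    · exact casePP hb0 hb1
  exact this.continuousWithinAt
end
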